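/- Let 0 < p < 1. There exists a constant c_p > 0, depending only on p and λ = sup_k m_k, such that for every N ∈ ℕ and every p-atom a with support contained in I_N (i.e. supp(a) ⊆ I_N, ∫_{I_N} a dμ = 0, and ‖a‖_∞ ≤ μ(I_N)^{−1/p} = M_N^{1/p}), one has ∫_{G_m ∖ I_N} ( sup_{n≥1} |S_n a(x)|/(n+1)^{1/p−1} )^p dμ(x) ≤ c_p. -/

import Mathlib

/-! Partial sums of an atom `a` are convolutions with the Dirichlet kernels,
`S_n a(x) = ∫ a(t) D_n(x - t) dμ(t)`. Since `ψ_k ≡ 1` on `I_N` for `k < M_N`, the mean-zero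
condition kills `S_n a` for `n ≤ M_N`. Splitting `D_n` along the digits of `n` and using
`D_{M_j} = M_j 𝟙_{I_j}` gives `|D_n(z)| ≤ Σ_{j ≤ s} m_j M_j ≤ 2λ M_s` whenever `z_s ≠ 0`, so
`|S_n a| ≤ M_N^{1/p - 1} · 2λ M_s` on `I_s ∖ I_{s+1}` (`s < N`); as only `n > M_N` contribute,
the weighted maximal function is at most `2λ M_s` there. Since `μ(I_s) = M_s⁻¹`, its `p`-th power
integrates over `I_s ∖ I_{s+1}` to at most `(2λ)^p M_s^{p-1} ≤ (2λ)^p (2^{p-1})^s`, a geometric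
series because `p < 1`. -/

open MeasureTheory Filter ENNReal Finset

noncomputable section

/-- The Vilenkin group `G_m`: complete direct product of cyclic groups `ℤ_{m_k}`. -/
abbrev Gm (m : ℕ → ℕ) : Type := ∀ k : ℕ, ZMod (m k)

/-- The generalized powers `M_0 = 1`, `M_{k+1} = m_k M_k`. -/
def Mgen (m : ℕ → ℕ) : ℕ → ℕ
  | 0 => 1
  | k + 1 => m k * Mgen m k

/-- The digits of `n` in the generalized number system `n = Σ_j n_j M_j`. -/
def digit (m : ℕ → ℕ) (n j : ℕ) : ℕ := (n / Mgen m j) % m j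

/-- The generalized Rademacher functions `r_k(x) = exp(2πi x_k / m_k)`. -/
def rade (m : ℕ → ℕ) (k : ℕ) (x : Gm m) : ℂ :=
  Complex.exp (2 * Real.pi * Complex.I * ((x k).val : ℂ) / (m k : ℂ))

/-- The Vilenkin system `ψ_n = Π_k r_k^{n_k}` (all digits `n_k` with `k > n` vanish). -/
def psi (m : ℕ → ℕ) (n : ℕ) (x : Gm m) : ℂ :=
  ∏ k ∈ Finset.range (n + 1), rade m k x ^ digit m n k

/-- The cylinder `I_n(x) = {y : y_0 = x_0, ..., y_{n-1} = x_{n-1}}`. -/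
def cyl (m : ℕ → ℕ) (n : ℕ) (x : Gm m) : Set (Gm m) := {y | ∀ j < n, y j = x j}

/-- Vilenkin–Fourier coefficient of an integrable function. -/
def fcoef (m : ℕ → ℕ) (μ : Measure (Gm m)) (f : Gm m → ℂ) (k : ℕ) : ℂ :=
  ∫ x, f x * (starRingEnd ℂ) (psi m k x) ∂μ

/-- Partial sums of the Vilenkin–Fourier series of a function. -/
def Spart (m : ℕ → ℕ) (μ : Measure (Gm m)) (f : Gm m → ℂ) (n : ℕ) (x : Gm m) : ℂ :=
  ∑ k ∈ Finset.range n, fcoef m μ f k * psi m k x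

/-- The Dirichlet kernels `D_n = Σ_{k<n} ψ_k`. -/
def Dker (m : ℕ → ℕ) (n : ℕ) (x : Gm m) : ℂ :=
  ∑ k ∈ Finset.range n, psi m k x

/-- `f = (f^{(n)})` is a martingale w.r.t. the filtration generated by the cylinders:
each `f^{(n)}` is integrable and, for `n ≤ k`, the conditional expectation of `f^{(k)}`
on the `n`-th σ-algebra (the average on each cylinder `I_n(x)`) equals `f^{(n)}`. -/
def IsVMartingale (m : ℕ → ℕ) (μ : Measure (Gm m)) (f : ℕ → Gm m → ℂ) : Prop :=
  (∀ n, Integrable (f n) μ) ∧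
  ∀ n k : ℕ, n ≤ k → ∀ x : Gm m, f n x = (Mgen m n : ℂ) * ∫ t in cyl m n x, f k t ∂μ

/-- Vilenkin–Fourier coefficient of a martingale: `lim_k ∫ f^{(k)} ψ̄_i dμ`; since the
integral is independent of `k` once `M_k > i`, and `M_{i+1} > i`, we take `k = i+1`. -/
def mfhat (m : ℕ → ℕ) (μ : Measure (Gm m)) (f : ℕ → Gm m → ℂ) (i : ℕ) : ℂ :=
  ∫ x, f (i + 1) x * (starRingEnd ℂ) (psi m i x) ∂μ

/-- The `H_p` (quasi-)norm of a martingale: `‖sup_n |f^{(n)}|‖_{L^p(μ)}`, as an `ℝ≥0∞`. -/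
def HpNorm (m : ℕ → ℕ) (μ : Measure (Gm m)) (p : ℝ) (f : ℕ → Gm m → ℂ) : ℝ≥0∞ :=
  (∫⁻ x, (⨆ n, (‖f n x‖₊ : ℝ≥0∞)) ^ p ∂μ) ^ (1 / p)

variable {m : ℕ → ℕ}

section Arithmetic

lemma Mgen_succ (k : ℕ) : Mgen m (k + 1) = m k * Mgen m k := rfl

lemma Mgen_pos (hm : ∀ k, 2 ≤ m k) (k : ℕ) : 0 < Mgen m k := by
  induction k with
  | zero => exact Nat.one_pos
  | succ k ih => exact Nat.mul_pos (by linarith [hm k]) ih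

lemma two_pow_le_Mgen (hm : ∀ k, 2 ≤ m k) (k : ℕ) : 2 ^ k ≤ Mgen m k := by
  induction k with
  | zero => exact le_rfl
  | succ k ih => rw [pow_succ', Mgen_succ]; exact Nat.mul_le_mul (hm k) ih

lemma lt_Mgen_self (hm : ∀ k, 2 ≤ m k) (k : ℕ) : k < Mgen m k :=
  k.lt_two_pow_self.trans_le (two_pow_le_Mgen hm k)

lemma Mgen_dvd_Mgen {i j : ℕ} (h : i ≤ j) : Mgen m i ∣ Mgen m j := by
  induction j, h using Nat.le_induction with
  | base => rfl
  | succ j _ ih => exact ih.mul_left _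

lemma Mgen_mono (hm : ∀ k, 2 ≤ m k) {i j : ℕ} (h : i ≤ j) : Mgen m i ≤ Mgen m j :=
  Nat.le_of_dvd (Mgen_pos hm j) (Mgen_dvd_Mgen h)

lemma sum_range_succ_Mgen_le (hm : ∀ k, 2 ≤ m k) (s : ℕ) :
    ∑ j ∈ range (s + 1), Mgen m j ≤ 2 * Mgen m s := by
  induction s with
  | zero => simp [Mgen]
  | succ s ih =>
    rw [sum_range_succ, Mgen_succ]
    nlinarith [hm s]

lemma Mgen_rpow_le_of_nonpos (hm : ∀ k, 2 ≤ m k) {r : ℝ} (hr : r ≤ 0) (s : ℕ) :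
    (Mgen m s : ℝ) ^ r ≤ ((2 : ℝ) ^ r) ^ s := by
  rw [← Real.rpow_natCast, ← Real.rpow_mul zero_le_two, mul_comm, Real.rpow_mul zero_le_two,
    Real.rpow_natCast]
  exact Real.rpow_le_rpow_of_nonpos (by positivity) (by exact_mod_cast two_pow_le_Mgen hm s) hr

lemma digit_eq_zero_of_lt {n k : ℕ} (h : n < Mgen m k) : digit m n k = 0 := by
  simp [digit, Nat.div_eq_of_lt h]

lemma digit_mul_Mgen_add (hm : ∀ k, 2 ≤ m k) {K u v : ℕ} (hu : u < m K) (hv : v < Mgen m K)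
    (k : ℕ) : digit m (u * Mgen m K + v) k = (if k = K then u else 0) + digit m v k := by
  have hMk := Mgen_pos hm k
  rcases lt_trichotomy k K with hk | rfl | hk
  · obtain ⟨c, hc⟩ := Mgen_dvd_Mgen (m := m) (Nat.succ_le_of_lt hk)
    rw [if_neg hk.ne, zero_add, digit, digit, hc, Mgen_succ,
      show u * (m k * Mgen m k * c) + v = v + Mgen m k * (m k * (u * c)) by ring,
      Nat.add_mul_div_left _ _ hMk, Nat.add_mul_mod_self_left]
  · rw [if_pos rfl, digit_eq_zero_of_lt hv, add_zero, digit,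
      Nat.add_comm, Nat.add_mul_div_right _ _ hMk, Nat.div_eq_of_lt hv, zero_add,
      Nat.mod_eq_of_lt hu]
  · have hlt : u * Mgen m K + v < Mgen m k := by
      calc u * Mgen m K + v < (u + 1) * Mgen m K := by linarith
        _ ≤ Mgen m (K + 1) := by rw [Mgen_succ]; exact Nat.mul_le_mul_right _ hu
        _ ≤ Mgen m k := Mgen_mono hm hk
    rw [if_neg hk.ne', zero_add, digit_eq_zero_of_lt hlt,
      digit_eq_zero_of_lt (hv.trans_le (Mgen_mono hm hk.le))]

end Arithmetic

section Cylinders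

lemma mem_cyl_succ {n : ℕ} {x y : Gm m} : y ∈ cyl m (n + 1) x ↔ y ∈ cyl m n x ∧ y n = x n := by
  simp only [cyl, Set.mem_ofPred_eq, Nat.lt_succ_iff_lt_or_eq, or_imp, forall_and, forall_eq]

lemma measurableSet_cyl (n : ℕ) (x : Gm m) : MeasurableSet (cyl m n x) := by
  simp only [cyl, Set.ofPred_forall]
  exact .iInter fun j => .iInter fun _ => measurable_pi_apply j (measurableSet_singleton _)

lemma cyl_subset_cyl {k n : ℕ} (h : k ≤ n) (x : Gm m) : cyl m n x ⊆ cyl m k x :=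
  fun _ hy j hj => hy j (hj.trans_le h)

lemma compl_cyl_subset_biUnion {N : ℕ} {x : Gm m} :
    (cyl m N x)ᶜ ⊆ ⋃ s ∈ range N, cyl m s x \ cyl m (s + 1) x := by
  classical
  intro y hy
  have hex : ∃ j, j < N ∧ y j ≠ x j := by simpa [cyl] using hy
  obtain ⟨hsN, hs⟩ := Nat.find_spec hex
  refine Set.mem_biUnion (mem_coe.2 (mem_range.2 hsN))
    ⟨fun j hj => ?_, fun h => hs (mem_cyl_succ.1 h).2⟩
  by_contra hne
  exact Nat.find_min hex hj ⟨hj.trans hsN, hne⟩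

open Function in
lemma pairwise_disjoint_cyl_sdiff (x : Gm m) :
    Pairwise (Disjoint on fun s => cyl m s x \ cyl m (s + 1) x) := by
  refine fun s t hst => Set.disjoint_left.2 fun y hs ht => ?_
  rcases hst.lt_or_gt with h | h
  · exact hs.2 (cyl_subset_cyl h x ht.1)
  · exact ht.2 (cyl_subset_cyl h x hs.1)

end Cylinders

section Characters

lemma rade_eq_stdAddChar (k : ℕ) [NeZero (m k)] (x : Gm m) :
    rade m k x = ZMod.stdAddChar (x k) := by
  rw [ZMod.stdAddChar_apply, ZMod.toCircle_apply]; rfl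

lemma norm_rade (k : ℕ) (x : Gm m) : ‖rade m k x‖ = 1 := by
  simp [rade, Complex.norm_exp]

lemma rade_eq_one_of_eq_zero {k : ℕ} {x : Gm m} (h : x k = 0) : rade m k x = 1 := by
  simp [rade, h]

lemma rade_sub_mul (hm : ∀ k, 2 ≤ m k) (k : ℕ) (x t : Gm m) :
    rade m k (x - t) * rade m k t = rade m k x := by
  have : NeZero (m k) := ⟨by linarith [hm k]⟩
  simp only [rade_eq_stdAddChar, ← AddChar.map_add_eq_mul, Pi.sub_apply, sub_add_cancel]

lemma sum_range_rade_pow_eq_zero (hm : ∀ k, 2 ≤ m k) {k : ℕ} {x : Gm m} (h : x k ≠ 0) :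
    ∑ w ∈ range (m k), rade m k x ^ w = 0 := by
  have : NeZero (m k) := ⟨by linarith [hm k]⟩
  have hne : rade m k x ≠ 1 := by
    rw [rade_eq_stdAddChar, ← AddChar.map_zero_eq_one (ZMod.stdAddChar (N := m k)),
      ZMod.injective_stdAddChar.ne_iff]
    exact h
  have hpow : rade m k x ^ m k = 1 := by
    rw [rade_eq_stdAddChar, ← AddChar.map_nsmul_eq_pow, nsmul_eq_mul, ZMod.natCast_self,
      zero_mul, AddChar.map_zero_eq_one]
  rw [geom_sum_eq hne, hpow, sub_self, zero_div]

lemma psi_eq_prod (hm : ∀ k, 2 ≤ m k) {n L : ℕ} (hL : n < L) (x : Gm m) :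
    psi m n x = ∏ k ∈ range L, rade m k x ^ digit m n k := by
  refine prod_subset (range_subset_range.mpr hL) fun k _ hk => ?_
  have hnk : n < k := Nat.lt_of_succ_le (not_lt.mp (mem_range.not.mp hk))
  rw [digit_eq_zero_of_lt (hnk.trans (lt_Mgen_self hm k)), pow_zero]

lemma norm_psi (n : ℕ) (x : Gm m) : ‖psi m n x‖ = 1 := by
  simp [psi, norm_rade]

lemma psi_mul_Mgen_add (hm : ∀ k, 2 ≤ m k) {K u v : ℕ} (hu : u < m K) (hv : v < Mgen m K)
    (x : Gm m) : psi m (u * Mgen m K + v) x = rade m K x ^ u * psi m v x := by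
  have hK : K < u * Mgen m K + v + K + 1 := by omega
  rw [psi_eq_prod hm (by omega : u * Mgen m K + v < u * Mgen m K + v + K + 1),
    psi_eq_prod hm (by omega : v < u * Mgen m K + v + K + 1)]
  simp only [digit_mul_Mgen_add hm hu hv, pow_add, prod_mul_distrib, pow_ite, pow_zero,
    prod_ite_eq', mem_range.mpr hK, if_true]

lemma psi_eq_one_of_mem_cyl (hm : ∀ k, 2 ≤ m k) {N n : ℕ} (hn : n < Mgen m N) {t : Gm m}
    (ht : t ∈ cyl m N 0) : psi m n t = 1 := by
  refine prod_eq_one fun k _ => ?_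
  rcases lt_or_ge k N with hk | hk
  · rw [rade_eq_one_of_eq_zero (ht k hk), one_pow]
  · rw [digit_eq_zero_of_lt (hn.trans_le (Mgen_mono hm hk)), pow_zero]

lemma psi_sub_mul (hm : ∀ k, 2 ≤ m k) (n : ℕ) (x t : Gm m) :
    psi m n (x - t) * psi m n t = psi m n x := by
  simp only [psi, ← prod_mul_distrib, ← mul_pow, rade_sub_mul hm]

lemma psi_mul_conj (hm : ∀ k, 2 ≤ m k) (n : ℕ) (x t : Gm m) :
    psi m n x * starRingEnd ℂ (psi m n t) = psi m n (x - t) := by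
  rw [← psi_sub_mul hm n x t, mul_assoc, Complex.mul_conj, Complex.normSq_eq_norm_sq,
    norm_psi]
  simp

lemma measurable_psi (n : ℕ) : Measurable (psi m n) := by
  unfold psi rade
  fun_prop

end Characters

section DirichletKernel

lemma Dker_mul_Mgen_add (hm : ∀ k, 2 ≤ m k) {K u v : ℕ} (hu : u < m K) (hv : v ≤ Mgen m K)
    (z : Gm m) :
    Dker m (u * Mgen m K + v) z = Dker m (u * Mgen m K) z + rade m K z ^ u * Dker m v z := by
  simp only [Dker, sum_range_add, mul_sum]
  congr 1
  exact sum_congr rfl fun i hi => psi_mul_Mgen_add hm hu ((mem_range.mp hi).trans_le hv) z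

lemma Dker_mul_Mgen (hm : ∀ k, 2 ≤ m k) {K u : ℕ} (hu : u ≤ m K) (z : Gm m) :
    Dker m (u * Mgen m K) z = (∑ w ∈ range u, rade m K z ^ w) * Dker m (Mgen m K) z := by
  induction u with
  | zero => simp [Dker]
  | succ u ih =>
    rw [add_mul, one_mul, Dker_mul_Mgen_add hm hu le_rfl, ih (by omega), sum_range_succ,
      add_mul]

lemma Dker_Mgen (hm : ∀ k, 2 ≤ m k) (K : ℕ) (z : Gm m) :
    Dker m (Mgen m K) z = (cyl m K 0).indicator (fun _ => (Mgen m K : ℂ)) z := by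
  induction K with
  | zero => simp [Dker, Mgen, psi, digit, cyl]
  | succ K ih =>
    rw [Mgen_succ, Dker_mul_Mgen hm le_rfl, ih]
    by_cases hK : z ∈ cyl m K 0
    · by_cases hzK : z K = 0
      · have hK' : z ∈ cyl m (K + 1) 0 := mem_cyl_succ.2 ⟨hK, hzK⟩
        simp [Set.indicator_of_mem hK, Set.indicator_of_mem hK', rade_eq_one_of_eq_zero hzK]
      · have hK' : z ∉ cyl m (K + 1) 0 := fun h => hzK (mem_cyl_succ.1 h).2
        rw [sum_range_rade_pow_eq_zero hm hzK, zero_mul, Set.indicator_of_notMem hK']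
    · have hK' : z ∉ cyl m (K + 1) 0 := fun h => hK (mem_cyl_succ.1 h).1
      rw [Set.indicator_of_notMem hK, Set.indicator_of_notMem hK', mul_zero]

lemma norm_Dker_le_sum (hm : ∀ k, 2 ≤ m k) (z : Gm m) {B n : ℕ} (hn : n < Mgen m B) :
    ‖Dker m n z‖ ≤ ∑ j ∈ range B, (m j : ℝ) * ‖Dker m (Mgen m j) z‖ := by
  induction B generalizing n with
  | zero =>
    obtain rfl : n = 0 := by simpa [Mgen] using hn
    simp [Dker]
  | succ B ih =>
    have hMB := Mgen_pos hm B
    have hu : n / Mgen m B < m B := (Nat.div_lt_iff_lt_mul hMB).2 (by rwa [Mgen_succ] at hn)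
    have hv : n % Mgen m B < Mgen m B := Nat.mod_lt _ hMB
    have hgeom : ‖∑ w ∈ range (n / Mgen m B), rade m B z ^ w‖ ≤ m B := by
      calc _ ≤ ∑ w ∈ range (n / Mgen m B), ‖rade m B z ^ w‖ := norm_sum_le _ _
        _ = (n / Mgen m B : ℕ) := by simp [norm_rade]
        _ ≤ m B := by exact_mod_cast hu.le
    conv_lhs => rw [← Nat.div_add_mod' n (Mgen m B)]
    rw [Dker_mul_Mgen_add hm hu hv.le, Dker_mul_Mgen hm hu.le, sum_range_succ]
    refine (norm_add_le _ _).trans ((add_le_add ?_ ?_).trans_eq (add_comm _ _))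
    · rw [norm_mul]
      exact mul_le_mul_of_nonneg_right hgeom (norm_nonneg _)
    · rw [norm_mul, norm_pow, norm_rade, one_pow, one_mul]
      exact ih hv

lemma norm_Dker_le (hm : ∀ k, 2 ≤ m k) {lam : ℕ} (hlam : ∀ k, m k ≤ lam) {s : ℕ} {z : Gm m}
    (hz : z s ≠ 0) (n : ℕ) : ‖Dker m n z‖ ≤ 2 * lam * Mgen m s := by
  have hterm : ∀ j,
      (m j : ℝ) * ‖Dker m (Mgen m j) z‖ ≤ if j ≤ s then (lam : ℝ) * Mgen m j else 0 := by
    intro j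
    rw [Dker_Mgen hm]
    split_ifs with hj
    · refine mul_le_mul (by exact_mod_cast hlam j) ?_ (norm_nonneg _) (Nat.cast_nonneg _)
      exact (norm_indicator_le_norm_self _ _).trans (by simp)
    · have hz' : z ∉ cyl m j 0 := fun h => hz (h s (by omega))
      simp [Set.indicator_of_notMem hz']
  calc ‖Dker m n z‖ ≤ ∑ j ∈ range (n + 1), (m j : ℝ) * ‖Dker m (Mgen m j) z‖ :=
        norm_Dker_le_sum hm z ((Nat.lt_succ_self n).trans (lt_Mgen_self hm _))
    _ ≤ ∑ j ∈ range (n + 1), if j ≤ s then (lam : ℝ) * Mgen m j else 0 :=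
        sum_le_sum fun j _ => hterm j
    _ = lam * ∑ j ∈ (range (n + 1)).filter (· ≤ s), (Mgen m j : ℝ) := by
        rw [sum_filter, mul_sum]
        exact sum_congr rfl fun j _ => by split_ifs <;> simp
    _ ≤ lam * ∑ j ∈ range (s + 1), (Mgen m j : ℝ) := by
        gcongr
        exact fun j hj => mem_range.2 (Nat.lt_succ_of_le (mem_filter.1 hj).2)
    _ ≤ lam * (2 * Mgen m s) := by gcongr; exact_mod_cast sum_range_succ_Mgen_le hm s
    _ = 2 * lam * Mgen m s := by ring

end DirichletKernel

/-- The paper's `sup_{n ≥ 1} |S_n a| / (n + 1)^{1/p - 1}`, reindexed from `n - 1`. -/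
def weightedMaximal (m : ℕ → ℕ) (μ : Measure (Gm m)) (p : ℝ) (a : Gm m → ℂ) (x : Gm m) :
    ℝ≥0∞ :=
  ⨆ n : ℕ, ENNReal.ofReal ‖Spart m μ a (n + 1) x‖ / ENNReal.ofReal (((n : ℝ) + 2) ^ (1 / p - 1))

section Atoms

variable {μ : Measure (Gm m)} {a : Gm m → ℂ} {N : ℕ} {p : ℝ} {lam : ℕ}

lemma fcoef_eq_zero_of_lt_Mgen (hm : ∀ k, 2 ≤ m k) (hsupp : ∀ x ∉ cyl m N 0, a x = 0)
    (hint : ∫ x in cyl m N 0, a x ∂μ = 0) {k : ℕ} (hk : k < Mgen m N) : fcoef m μ a k = 0 := by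
  have heq : (fun t => a t * starRingEnd ℂ (psi m k t)) = a := by
    funext t
    by_cases ht : t ∈ cyl m N 0
    · rw [psi_eq_one_of_mem_cyl hm hk ht, map_one, mul_one]
    · rw [hsupp t ht, zero_mul]
  rw [fcoef, heq, ← setIntegral_eq_integral_of_forall_compl_eq_zero hsupp, hint]

lemma Spart_eq_zero_of_le_Mgen (hm : ∀ k, 2 ≤ m k) (hsupp : ∀ x ∉ cyl m N 0, a x = 0)
    (hint : ∫ x in cyl m N 0, a x ∂μ = 0) {n : ℕ} (hn : n ≤ Mgen m N) (x : Gm m) :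
    Spart m μ a n x = 0 :=
  sum_eq_zero fun k hk => by
    rw [fcoef_eq_zero_of_lt_Mgen hm hsupp hint ((mem_range.1 hk).trans_le hn), zero_mul]

lemma Spart_eq_integral_Dker (hm : ∀ k, 2 ≤ m k) (ha : Integrable a μ) (n : ℕ) (x : Gm m) :
    Spart m μ a n x = ∫ t, a t * Dker m n (x - t) ∂μ := by
  have hint : ∀ k ∈ range n,
      Integrable (fun t => a t * starRingEnd ℂ (psi m k t) * psi m k x) μ := fun k _ =>
    (ha.mul_bdd (c := 1)
      (Complex.continuous_conj.measurable.comp (measurable_psi k)).aestronglyMeasurable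
      (ae_of_all _ fun t => by simp [norm_psi])).mul_const _
  simp_rw [Spart, fcoef, ← integral_mul_const]
  rw [← integral_finsetSum _ hint]
  simp_rw [Dker, mul_sum, mul_assoc, mul_comm (starRingEnd ℂ _), psi_mul_conj hm]

lemma norm_Spart_le (hm : ∀ k, 2 ≤ m k) (hlam : ∀ k, m k ≤ lam) (ha : Integrable a μ)
    (hsupp : ∀ x ∉ cyl m N 0, a x = 0) {A : ℝ} (hA : ∀ x, ‖a x‖ ≤ A)
    (hfin : μ (cyl m N 0) < ∞) {s : ℕ} (hsN : s < N) {x : Gm m} (hx : x s ≠ 0) (n : ℕ) :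
    ‖Spart m μ a n x‖ ≤ A * (2 * lam * Mgen m s) * μ.real (cyl m N 0) := by
  rw [Spart_eq_integral_Dker hm ha, ← setIntegral_eq_integral_of_forall_compl_eq_zero
    fun t ht => by rw [hsupp t ht, zero_mul]]
  refine norm_setIntegral_le_of_norm_le_const hfin fun t ht => ?_
  have hxt : (x - t) s ≠ 0 := by rwa [Pi.sub_apply, ht s hsN, Pi.zero_apply, sub_zero]
  rw [norm_mul]
  exact mul_le_mul (hA t) (norm_Dker_le hm hlam hxt n) (norm_nonneg _)
    ((norm_nonneg _).trans (hA t))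

lemma weightedMaximal_le (hm : ∀ k, 2 ≤ m k) (hlam : ∀ k, m k ≤ lam) (hp0 : 0 < p)
    (hp1 : p ≤ 1) (ha : Integrable a μ) (hsupp : ∀ x ∉ cyl m N 0, a x = 0)
    (hint : ∫ x in cyl m N 0, a x ∂μ = 0) (hA : ∀ x, ‖a x‖ ≤ (Mgen m N : ℝ) ^ (1 / p))
    (hμN : μ (cyl m N 0) = (Mgen m N : ℝ≥0∞)⁻¹) {s : ℕ} (hsN : s < N) {x : Gm m}
    (hx : x s ≠ 0) : weightedMaximal m μ p a x ≤ ENNReal.ofReal (2 * lam * Mgen m s) := by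
  have hMN : (0 : ℝ) < Mgen m N := by exact_mod_cast Mgen_pos hm N
  have hγ : 0 ≤ 1 / p - 1 := by rw [sub_nonneg, le_div_iff₀ hp0]; linarith
  have hfin : μ (cyl m N 0) < ∞ := by
    rw [hμN, ENNReal.inv_lt_top]; exact_mod_cast Mgen_pos hm N
  have hμreal : μ.real (cyl m N 0) = (Mgen m N : ℝ)⁻¹ := by
    rw [measureReal_def, hμN, ENNReal.toReal_inv, ENNReal.toReal_natCast]
  refine iSup_le fun n => ?_
  rcases le_or_gt (n + 1) (Mgen m N) with hn | hn
  · simp [Spart_eq_zero_of_le_Mgen hm hsupp hint hn]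
  refine ENNReal.div_le_of_le_mul ?_
  rw [← ENNReal.ofReal_mul (by positivity)]
  refine ENNReal.ofReal_le_ofReal ?_
  calc ‖Spart m μ a (n + 1) x‖
      ≤ (Mgen m N : ℝ) ^ (1 / p) * (2 * lam * Mgen m s) * (Mgen m N : ℝ)⁻¹ :=
        hμreal ▸ norm_Spart_le hm hlam ha hsupp hA hfin hsN hx (n + 1)
    _ = 2 * lam * Mgen m s * (Mgen m N : ℝ) ^ (1 / p - 1) := by
        rw [Real.rpow_sub hMN, Real.rpow_one]; ring
    _ ≤ 2 * lam * Mgen m s * ((n : ℝ) + 2) ^ (1 / p - 1) := by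
        have : (Mgen m N : ℝ) ≤ n + 2 := by norm_cast; omega
        gcongr

lemma setLIntegral_weightedMaximal_rpow_le (hm : ∀ k, 2 ≤ m k) (hlam : ∀ k, m k ≤ lam)
    (hp0 : 0 < p) (hp1 : p ≤ 1) (ha : Integrable a μ) (hsupp : ∀ x ∉ cyl m N 0, a x = 0)
    (hint : ∫ x in cyl m N 0, a x ∂μ = 0) (hA : ∀ x, ‖a x‖ ≤ (Mgen m N : ℝ) ^ (1 / p))
    (hμ : ∀ n, μ (cyl m n 0) = (Mgen m n : ℝ≥0∞)⁻¹) {s : ℕ} (hsN : s < N) :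
    ∫⁻ x in cyl m s 0 \ cyl m (s + 1) 0, weightedMaximal m μ p a x ^ p ∂μ ≤
      ENNReal.ofReal ((2 * lam) ^ p * ((2 : ℝ) ^ (p - 1)) ^ s) := by
  have hMs : (0 : ℝ) < Mgen m s := by exact_mod_cast Mgen_pos hm s
  calc _ ≤ ∫⁻ _ in cyl m s 0 \ cyl m (s + 1) 0, ENNReal.ofReal ((2 * lam * Mgen m s) ^ p) ∂μ := by
        refine setLIntegral_mono' ((measurableSet_cyl s 0).diff (measurableSet_cyl _ 0))
          fun x hx => ?_
        have hxs : x s ≠ 0 := fun h => hx.2 (mem_cyl_succ.2 ⟨hx.1, h⟩)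
        rw [← ENNReal.ofReal_rpow_of_nonneg (by positivity) hp0.le]
        exact ENNReal.rpow_le_rpow
          (weightedMaximal_le hm hlam hp0 hp1 ha hsupp hint hA (hμ N) hsN hxs) hp0.le
    _ ≤ ENNReal.ofReal ((2 * lam * Mgen m s) ^ p) * μ (cyl m s 0) := by
        rw [setLIntegral_const]; gcongr; exact Set.sdiff_subset
    _ = ENNReal.ofReal ((2 * lam) ^ p * (Mgen m s : ℝ) ^ (p - 1)) := by
        rw [hμ s, ← ENNReal.ofReal_natCast, ← ENNReal.ofReal_inv_of_pos hMs,
          ← ENNReal.ofReal_mul (by positivity), Real.mul_rpow (by positivity) hMs.le,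
          Real.rpow_sub hMs, Real.rpow_one]
        ring_nf
    _ ≤ ENNReal.ofReal ((2 * lam) ^ p * ((2 : ℝ) ^ (p - 1)) ^ s) := by
        gcongr
        exact Mgen_rpow_le_of_nonpos hm (by linarith) s

end Atoms

lemma sum_range_ofReal_mul_pow_le {C q : ℝ} (hC : 0 ≤ C) (hq0 : 0 ≤ q) (hq1 : q < 1) (N : ℕ) :
    ∑ s ∈ range N, ENNReal.ofReal (C * q ^ s) ≤ ENNReal.ofReal (C / (1 - q)) := by
  rw [← ENNReal.ofReal_sum_of_nonneg fun _ _ => by positivity, ← mul_sum]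
  refine ENNReal.ofReal_le_ofReal ?_
  have hgeom := geom_sum_Ico_le_of_lt_one (m := 0) (n := N) hq0 hq1
  rw [← range_eq_Ico, pow_zero] at hgeom
  rw [div_eq_mul_one_div]
  gcongr

/-- For `0 < p < 1` there is `c_p > 0`, depending only on `p` and `λ = sup_k m_k`, such
that for every `N` and every `p`-atom `a` supported in `I_N`,
`∫_{G_m ∖ I_N} (sup_{n≥1} |S_n a|/(n+1)^{1/p-1})^p dμ ≤ c_p`. -/
theorem maximal_operator_atom_bound
    (p : ℝ) (hp0 : 0 < p) (hp1 : p < 1) (lam : ℕ) :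
    ∃ c : ℝ, 0 < c ∧
      ∀ (m : ℕ → ℕ), (∀ k, 2 ≤ m k) → (∀ k, m k ≤ lam) →
      ∀ (μ : Measure (Gm m)), (∀ n x, μ (cyl m n x) = ((Mgen m n : ℝ≥0∞))⁻¹) →
      ∀ (N : ℕ) (a : Gm m → ℂ), Measurable a →
        (∀ x ∉ cyl m N 0, a x = 0) →
        (∫ x in cyl m N 0, a x ∂μ) = 0 →
        (∀ x, ‖a x‖ ≤ (Mgen m N : ℝ) ^ (1 / p)) →
        ∫⁻ x in (cyl m N 0)ᶜ,
            (⨆ n : ℕ, ENNReal.ofReal ‖Spart m μ a (n + 1) x‖ /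
              ENNReal.ofReal (((n : ℝ) + 2) ^ (1 / p - 1))) ^ p ∂μ ≤
          ENNReal.ofReal c := by
  have hq : (2 : ℝ) ^ (p - 1) < 1 := Real.rpow_lt_one_of_one_lt_of_neg one_lt_two (by linarith)
  -- the `+ 1` keeps `c` positive when `lam = 0`
  refine ⟨(2 * lam) ^ p / (1 - 2 ^ (p - 1)) + 1,
    add_pos_of_nonneg_of_pos (div_nonneg (by positivity) (sub_nonneg.2 hq.le)) one_pos, ?_⟩
  intro m hm hlam μ hμ N a ha hsupp hint hA
  have : IsProbabilityMeasure μ := ⟨by simpa [cyl, Mgen] using hμ 0 0⟩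
  have ha' : Integrable a μ := .of_bound ha.aestronglyMeasurable _ (ae_of_all _ hA)
  calc ∫⁻ x in (cyl m N 0)ᶜ, weightedMaximal m μ p a x ^ p ∂μ
      ≤ ∫⁻ x in ⋃ s ∈ range N, cyl m s 0 \ cyl m (s + 1) 0, weightedMaximal m μ p a x ^ p ∂μ :=
        lintegral_mono_set compl_cyl_subset_biUnion
    _ = ∑ s ∈ range N, ∫⁻ x in cyl m s 0 \ cyl m (s + 1) 0, weightedMaximal m μ p a x ^ p ∂μ :=
        lintegral_biUnion_finset ((pairwise_disjoint_cyl_sdiff 0).set_pairwise _)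
          (fun s _ => (measurableSet_cyl s 0).diff (measurableSet_cyl _ 0)) _
    _ ≤ ∑ s ∈ range N, ENNReal.ofReal ((2 * lam) ^ p * ((2 : ℝ) ^ (p - 1)) ^ s) :=
        sum_le_sum fun s hs => setLIntegral_weightedMaximal_rpow_le hm hlam hp0 hp1.le ha' hsupp
          hint hA (fun n => hμ n 0) (mem_range.1 hs)
    _ ≤ ENNReal.ofReal ((2 * lam) ^ p / (1 - 2 ^ (p - 1))) :=
        sum_range_ofReal_mul_pow_le (by positivity) (by positivity) hq N
    _ ≤ ENNReal.ofReal ((2 * lam) ^ p / (1 - 2 ^ (p - 1)) + 1) :=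
        ENNReal.ofReal_le_ofReal (le_add_of_nonneg_right zero_le_one)

end
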